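/- The group G₂ of order 64 with presentation ⟨a, b | a^16 = 1, b^4 = 1, [b,a] = a^{-2}⟩ does not satisfy property (*); that is, G₂ does not embed as a subgroup of index 2 in any group generated by involutions. -/

import Mathlib

/-- A group `G` satisfies property (*) if it embeds as a subgroup of index 2 in
some group `Γ` generated by involutions (elements of order exactly 2). -/
def SatisfiesStar (G : Type*) [Group G] : Prop :=
  ∃ (Γ : Type) (_ : Group Γ) (f : G →* Γ),
    Function.Injective f ∧ f.range.index = 2 ∧
    Subgroup.closure {x : Γ | orderOf x = 2} = ⊤

/-- The relators of the presentation `⟨a, b | a^16, b^4, [b,a] = a⁻²⟩`, where `a` is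
`FreeGroup.of true`, `b` is `FreeGroup.of false`, and `[b,a] = b⁻¹a⁻¹ba`. -/
def G2Rels : Set (FreeGroup Bool) :=
  { FreeGroup.of true ^ 16,
    FreeGroup.of false ^ 4,
    (FreeGroup.of false)⁻¹ * (FreeGroup.of true)⁻¹ * FreeGroup.of false *
      FreeGroup.of true * ((FreeGroup.of true ^ (2 : ℤ))⁻¹)⁻¹ }

/-- The group `G₂ = ⟨a, b | a^16, b^4, [b,a] = a⁻²⟩` of order 64. -/
abbrev G2 : Type := PresentedGroup G2Rels

/-!
If `G` has index 2 in a group `Γ` generated by involutions, some involution `t` lies outside `G`,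
and conjugation by `t` restricts to an automorphism `τ` of `G` with `τ² = 1`. Every element of `Γ`
is `g` or `g t` with `g ∈ G`; the involutions among them are the `g` with `g² = 1` and the `g t`
with `τ g = g⁻¹`. A homomorphism `ν` on `G` with `ν ∘ τ = ν` extends to `Γ` by `g tⁿ ↦ ν g`, so if
`ν` also kills both kinds of elements, it kills every involution, hence all of `Γ`, and `ν = 1`.
For `G₂`, whatever `τ` is, one of the two parity characters `aˣ bʸ ↦ x mod 2` and `aˣ bʸ ↦ y mod 2`
is such a `ν`: a finite check in a concrete model of `G₂`.
-/

lemma pow_eq_one_or_self_of_sq_eq_one {M : Type*} [Monoid M] {x : M} (hx : x ^ 2 = 1) (n : ℕ) :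
    x ^ n = 1 ∨ x ^ n = x := by
  rw [pow_eq_pow_mod n hx]
  rcases Nat.mod_two_eq_zero_or_one n with h | h <;> simp [h]

section IndexTwo

variable {G Γ M : Type*} [Group G] [Group Γ] [Group M] {f : G →* Γ}

noncomputable def rangeConj (hf : Function.Injective f) [f.range.Normal] : Γ →* MulAut G :=
  (MulAut.congr (MonoidHom.ofInjective hf).symm).toMonoidHom.comp MulAut.conjNormal

lemma apply_rangeConj (hf : Function.Injective f) [f.range.Normal] (γ : Γ) (g : G) :
    f (rangeConj hf γ g) = γ * f g * γ⁻¹ := by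
  simp [rangeConj, MonoidHom.ofInjective_apply]

lemma exists_mul_pow_eq_of_index_eq_two (hidx : f.range.index = 2) {t : Γ} (ht : t ∉ f.range)
    (γ : Γ) : ∃ (g : G) (n : ℕ), f g * t ^ n = γ := by
  by_cases hγ : γ ∈ f.range
  · obtain ⟨g, rfl⟩ := hγ
    exact ⟨g, 0, by simp⟩
  · have : γ * t⁻¹ ∈ f.range := by
      rw [Subgroup.mul_mem_iff_of_index_two hidx, inv_mem_iff]
      exact iff_of_false hγ ht
    obtain ⟨g, hg⟩ := this
    exact ⟨g, 1, by rw [hg, pow_one, inv_mul_cancel_right]⟩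

lemma mul_pow_mul_mul_pow (hf : Function.Injective f) [f.range.Normal] (t : Γ) (g h : G)
    (i j : ℕ) : f g * t ^ i * (f h * t ^ j) = f (g * rangeConj hf (t ^ i) h) * t ^ (i + j) := by
  rw [map_mul, apply_rangeConj, pow_add]
  group

lemma exists_extension_of_index_eq_two (hf : Function.Injective f) [f.range.Normal]
    (hidx : f.range.index = 2) {t : Γ} (ht : t ∉ f.range) (ht2 : t ^ 2 = 1) (ν : G →* M)
    (hν : ∀ g, ν (rangeConj hf t g) = ν g) :
    ∃ φ : Γ →* M, ∀ g n, φ (f g * t ^ n) = ν g := by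
  classical
  let φ₀ : Γ → M := fun γ => ν (Function.invFun f (if γ ∈ f.range then γ else γ * t⁻¹))
  have hφ₀ : ∀ g n, φ₀ (f g * t ^ n) = ν g := by
    intro g n
    rcases pow_eq_one_or_self_of_sq_eq_one ht2 n with hn | hn
    · simp only [φ₀, hn, mul_one, if_pos (f.mem_range.mpr ⟨g, rfl⟩),
        Function.leftInverse_invFun hf g]
    · have hout : f g * t ∉ f.range := fun h => ht <| (f.range.mul_mem_cancel_left ⟨g, rfl⟩).mp h
      simp only [φ₀, hn, if_neg hout, mul_inv_cancel_right, Function.leftInverse_invFun hf g]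
  have hν_pow : ∀ (n : ℕ) g, ν (rangeConj hf (t ^ n) g) = ν g := by
    intro n g
    rcases pow_eq_one_or_self_of_sq_eq_one ht2 n with hn | hn <;> simp [hn, hν]
  refine ⟨MonoidHom.mk' φ₀ fun u v => ?_, hφ₀⟩
  obtain ⟨g, i, rfl⟩ := exists_mul_pow_eq_of_index_eq_two hidx ht u
  obtain ⟨h, j, rfl⟩ := exists_mul_pow_eq_of_index_eq_two hidx ht v
  rw [mul_pow_mul_mul_pow hf, hφ₀, hφ₀, hφ₀, map_mul, hν_pow]

lemma sq_mul_pow_eq_one_iff (hf : Function.Injective f) [f.range.Normal] {t : Γ} (ht2 : t ^ 2 = 1)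
    (g : G) (n : ℕ) : (f g * t ^ n) ^ 2 = 1 ↔ g * rangeConj hf (t ^ n) g = 1 := by
  rw [sq, mul_pow_mul_mul_pow hf, ← two_mul, pow_mul, ht2, one_pow, mul_one, ← map_one f,
    hf.eq_iff]

lemma Subgroup.exists_mem_notMem_of_closure_eq_top {H : Subgroup Γ} (hH : H ≠ ⊤) {S : Set Γ}
    (hS : Subgroup.closure S = ⊤) : ∃ s ∈ S, s ∉ H := by
  by_contra! h
  exact hH (eq_top_iff.mpr (hS ▸ (Subgroup.closure_le H).mpr h))

end IndexTwo

theorem not_satisfiesStar_of_forall_mulAut {G M : Type*} [Group G] [Group M]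
    (h : ∀ τ : MulAut G, τ ^ 2 = 1 → ∃ ν : G →* M, ν ≠ 1 ∧ (∀ g, ν (τ g) = ν g) ∧
      (∀ g, g * g = 1 → ν g = 1) ∧ ∀ g, τ g = g⁻¹ → ν g = 1) :
    ¬ SatisfiesStar G := by
  rintro ⟨Γ, _, f, hf, hidx, hgen⟩
  have := Subgroup.normal_of_index_eq_two hidx
  obtain ⟨t, ht2, ht⟩ := Subgroup.exists_mem_notMem_of_closure_eq_top (H := f.range)
    (fun h => absurd hidx (by simp [h])) hgen
  replace ht2 : t ^ 2 = 1 := ht2 ▸ pow_orderOf_eq_one t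
  obtain ⟨ν, hν1, hντ, hνsq, hνinv⟩ := h (rangeConj hf t) (by rw [← map_pow, ht2, map_one])
  obtain ⟨φ, hφ⟩ := exists_extension_of_index_eq_two hf hidx ht ht2 ν hντ
  have hinvol : ∀ γ : Γ, orderOf γ = 2 → φ γ = 1 := by
    intro γ hγ
    obtain ⟨g, n, rfl⟩ := exists_mul_pow_eq_of_index_eq_two hidx ht γ
    have hsq := (sq_mul_pow_eq_one_iff hf ht2 g n).mp (hγ ▸ pow_orderOf_eq_one _)
    rw [hφ]
    rcases pow_eq_one_or_self_of_sq_eq_one ht2 n with hn | hn <;> rw [hn] at hsq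
    · exact hνsq g (by simpa using hsq)
    · exact hνinv g (eq_inv_of_mul_eq_one_right hsq)
  have hker : φ.ker = ⊤ := eq_top_iff.mpr (hgen ▸ (Subgroup.closure_le _).mpr hinvol)
  refine hν1 (MonoidHom.ext fun g => ?_)
  rw [MonoidHom.one_apply, ← hφ g 0, pow_zero, mul_one]
  exact hker.ge (Subgroup.mem_top _)

lemma SatisfiesStar.of_mulEquiv {G H : Type*} [Group G] [Group H] (e : G ≃* H)
    (h : SatisfiesStar G) : SatisfiesStar H := by
  obtain ⟨Γ, _, f, hf, hidx, hgen⟩ := h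
  refine ⟨Γ, _, f.comp e.symm.toMonoidHom, hf.comp e.symm.injective, ?_, hgen⟩
  rwa [MonoidHom.range_comp, MonoidHom.range_eq_top_of_surjective _ e.symm.surjective,
    ← MonoidHom.range_eq_map]

-- `⟨x, y⟩` stands for `aˣ bʸ`; then `b a = a¹¹ b`, as `11 = 3⁻¹` in `ZMod 16`.
structure G2Model where
  x : ZMod 16
  y : ZMod 4
deriving DecidableEq, Fintype

namespace G2Model

def twist (y : ZMod 4) : ZMod 16 := 11 ^ y.val

lemma twist_add : ∀ y z : ZMod 4, twist (y + z) = twist y * twist z := by decide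

instance : Mul G2Model := ⟨fun g h => ⟨g.x + twist g.y * h.x, g.y + h.y⟩⟩
instance : One G2Model := ⟨⟨0, 0⟩⟩
instance : Inv G2Model := ⟨fun g => ⟨-(twist (-g.y) * g.x), -g.y⟩⟩

lemma mul_def (g h : G2Model) : g * h = ⟨g.x + twist g.y * h.x, g.y + h.y⟩ := rfl

instance : Group G2Model where
  mul_assoc g h k := by
    simp only [mul_def, twist_add, mk.injEq]
    exact ⟨by ring, by ring⟩
  one_mul := by decide
  mul_one := by decide
  inv_mul_cancel := by decide

def a : G2Model := ⟨1, 0⟩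
def b : G2Model := ⟨0, 1⟩

def eval {H : Type*} [Group H] (A B : H) (g : G2Model) : H := A ^ g.x.val * B ^ g.y.val

lemma eval_a_b : ∀ g : G2Model, eval a b g = g := by decide

lemma map_eq_eval {H : Type*} [Group H] (φ : G2Model →* H) (g : G2Model) :
    φ g = eval (φ a) (φ b) g := by
  rw [eval, ← map_pow, ← map_pow, ← map_mul]
  exact congrArg φ (eval_a_b g).symm

section Eval

variable {H : Type*} [Group H] {A B : H}

lemma pow_eq_pow_of_natCast_eq {n : ℕ} (hA : A ^ n = 1) {k l : ℕ}
    (h : (k : ZMod n) = (l : ZMod n)) : A ^ k = A ^ l := by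
  rw [pow_eq_pow_iff_modEq]
  exact Nat.ModEq.of_dvd (orderOf_dvd_of_pow_eq_one hA) ((ZMod.natCast_eq_natCast_iff _ _ _).mp h)

lemma mul_pow_eq_pow_mul (hA : A ^ 16 = 1) (hAB : B⁻¹ * A * B = A ^ 3) (m : ℕ) :
    B * A ^ m = A ^ (11 * m) * B := by
  have h : B⁻¹ * A ^ (11 * m) * B = A ^ m := by
    have hconj := conj_pow (a := B⁻¹) (b := A) (i := 11 * m)
    rw [inv_inv] at hconj
    rw [← hconj, hAB, ← pow_mul]
    refine pow_eq_pow_of_natCast_eq hA ?_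
    push_cast
    ring_nf
    rw [show (33 : ZMod 16) = 1 by decide, mul_one]
  rw [← h]
  group

lemma pow_mul_pow_eq_pow_mul_pow (hA : A ^ 16 = 1) (hAB : B⁻¹ * A * B = A ^ 3) (n m : ℕ) :
    B ^ n * A ^ m = A ^ (11 ^ n * m) * B ^ n := by
  induction n generalizing m with
  | zero => simp
  | succ k ih =>
    rw [pow_succ', mul_assoc, ih, ← mul_assoc, mul_pow_eq_pow_mul hA hAB, mul_assoc,
      pow_succ', show 11 * (11 ^ k * m) = 11 * 11 ^ k * m by ring]

lemma eval_mul (hA : A ^ 16 = 1) (hB : B ^ 4 = 1) (hAB : B⁻¹ * A * B = A ^ 3) (g h : G2Model) :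
    eval A B (g * h) = eval A B g * eval A B h := by
  have hx : A ^ (g * h).x.val = A ^ (g.x.val + 11 ^ g.y.val * h.x.val) :=
    pow_eq_pow_of_natCast_eq hA (by simp [mul_def, twist])
  have hy : B ^ (g * h).y.val = B ^ (g.y.val + h.y.val) :=
    pow_eq_pow_of_natCast_eq hB (by simp [mul_def])
  calc eval A B (g * h)
      = A ^ g.x.val * A ^ (11 ^ g.y.val * h.x.val) * B ^ g.y.val * B ^ h.y.val := by
        rw [eval, hx, hy, pow_add, pow_add, mul_assoc _ (B ^ _)]
    _ = A ^ g.x.val * (B ^ g.y.val * A ^ h.x.val) * B ^ h.y.val := by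
        rw [pow_mul_pow_eq_pow_mul_pow hA hAB]; group
    _ = eval A B g * eval A B h := by
        rw [eval, eval]; group

end Eval

def parity (c : Bool) (g : G2Model) : ZMod 2 :=
  if c then (g.x.val : ZMod 2) else (g.y.val : ZMod 2)

set_option maxRecDepth 10000 in
lemma parity_mul : ∀ (c : Bool) (g h : G2Model), parity c (g * h) = parity c g + parity c h := by
  decide

lemma exists_parity_ne_zero : ∀ c : Bool, ∃ g : G2Model, parity c g ≠ 0 := by decide

lemma parity_eq_zero_of_mul_self_eq_one :
    ∀ (c : Bool) (g : G2Model), g * g = 1 → parity c g = 0 := by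
  decide

-- `A` and `B` run over the candidates for `τ a` and `τ b`, `τ` an involutive automorphism.
set_option maxRecDepth 10000 in
lemma exists_parity_invariant : ∀ A B : G2Model, B ^ 4 = 1 → B⁻¹ * A * B = A ^ 3 →
    eval A B A = a → eval A B B = b →
    ∃ c : Bool, (∀ g, parity c (eval A B g) = parity c g) ∧
      ∀ g, eval A B g = g⁻¹ → parity c g = 0 := by
  decide

def parityHom (c : Bool) : G2Model →* Multiplicative (ZMod 2) :=
  MonoidHom.mk' (fun g => .ofAdd (parity c g)) fun g h => by rw [parity_mul, ofAdd_add]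

lemma b_pow_four : b ^ 4 = 1 := by decide

lemma b_inv_mul_a_mul_b : b⁻¹ * a * b = a ^ 3 := by decide

theorem not_satisfiesStar : ¬ SatisfiesStar G2Model := by
  refine not_satisfiesStar_of_forall_mulAut (M := Multiplicative (ZMod 2)) fun τ hτ => ?_
  have hτ_eval : ∀ g, τ g = eval (τ a) (τ b) g := map_eq_eval τ.toMonoidHom
  have hτ_inv : ∀ g, τ (τ g) = g := fun g => by
    rw [← MulAut.mul_apply, ← sq, hτ, MulAut.one_apply]
  obtain ⟨c, hc_eval, hc_anti⟩ := exists_parity_invariant (τ a) (τ b)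
    (by rw [← map_pow, b_pow_four, map_one])
    (by rw [← map_inv, ← map_mul, ← map_mul, b_inv_mul_a_mul_b, map_pow])
    (by rw [← hτ_eval, hτ_inv]) (by rw [← hτ_eval, hτ_inv])
  refine ⟨parityHom c, fun h => ?_, fun g => ?_, fun g hg => ?_, fun g hg => ?_⟩
  · obtain ⟨g, hg⟩ := exists_parity_ne_zero c
    exact hg (ofAdd_eq_one.mp (DFunLike.congr_fun h g))
  · exact congrArg Multiplicative.ofAdd (hτ_eval g ▸ hc_eval g)
  · exact ofAdd_eq_one.mpr (parity_eq_zero_of_mul_self_eq_one c g hg)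
  · exact ofAdd_eq_one.mpr (hc_anti g (hτ_eval g ▸ hg))

end G2Model

namespace G2

def a : G2 := PresentedGroup.of true
def b : G2 := PresentedGroup.of false

lemma a_pow_sixteen : a ^ 16 = 1 := by
  have h := PresentedGroup.one_of_mem (rels := G2Rels) (x := FreeGroup.of true ^ 16)
    (by simp [G2Rels])
  rwa [map_pow] at h

lemma b_pow_four : b ^ 4 = 1 := by
  have h := PresentedGroup.one_of_mem (rels := G2Rels) (x := FreeGroup.of false ^ 4)
    (by simp [G2Rels])
  rwa [map_pow] at h

lemma b_inv_mul_a_mul_b : b⁻¹ * a * b = a ^ 3 := by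
  have h := PresentedGroup.one_of_mem (rels := G2Rels) (x := (FreeGroup.of false)⁻¹ *
    (FreeGroup.of true)⁻¹ * FreeGroup.of false * FreeGroup.of true *
    ((FreeGroup.of true ^ (2 : ℤ))⁻¹)⁻¹) (by simp [G2Rels])
  change b⁻¹ * a⁻¹ * b * a * ((a ^ (2 : ℤ))⁻¹)⁻¹ = 1 at h
  calc b⁻¹ * a * b = a ^ 3 * (b⁻¹ * a⁻¹ * b * a * ((a ^ (2 : ℤ))⁻¹)⁻¹)⁻¹ := by group
    _ = a ^ 3 := by rw [h, inv_one, mul_one]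

lemma lift_rels_eq_one :
    ∀ r ∈ G2Rels, FreeGroup.lift (fun t => cond t G2Model.a G2Model.b) r = 1 := by
  intro r hr
  simp only [G2Rels, Set.mem_insert_iff, Set.mem_singleton_iff] at hr
  rcases hr with rfl | rfl | rfl <;>
    simp only [map_mul, map_inv, map_pow, map_zpow, FreeGroup.lift_apply_of] <;> decide

def toModel : G2 →* G2Model := PresentedGroup.toGroup lift_rels_eq_one

def ofModel : G2Model →* G2 :=
  MonoidHom.mk' (G2Model.eval a b) (G2Model.eval_mul a_pow_sixteen b_pow_four b_inv_mul_a_mul_b)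

lemma toModel_ofModel (g : G2Model) : toModel (ofModel g) = g := by
  change toModel (a ^ _ * b ^ _) = g
  rw [map_mul, map_pow, map_pow]
  exact G2Model.eval_a_b g

lemma ofModel_comp_toModel : ofModel.comp toModel = MonoidHom.id G2 :=
  PresentedGroup.ext fun t => by
    cases t <;> simp [toModel, ofModel, PresentedGroup.toGroup.of, G2Model.eval, G2Model.a,
      G2Model.b, a, b, show (1 : ZMod 4).val = 1 from rfl, show (1 : ZMod 16).val = 1 from rfl]

def mulEquivModel : G2 ≃* G2Model :=
  MonoidHom.toMulEquiv toModel ofModel ofModel_comp_toModel (MonoidHom.ext toModel_ofModel)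

end G2

/-- `G₂` does not satisfy property (*). -/
theorem G2_not_satisfiesStar : ¬ SatisfiesStar G2 :=
  fun h => G2Model.not_satisfiesStar (h.of_mulEquiv G2.mulEquivModel)
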